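/- Let ρ be a nonzero composition. Then: (1) for every integer r > |ρ|, T(ρ, r) = 0; and (2) for every integer r with 0 ≤ r ≤ |ρ|, T(ρ, r) + T(ρ, |ρ| - r) = 0. -/

import Mathlib

/-!
Statement 14: vanishing and antisymmetry of the sums `T(ρ, r)` from Lemma (keylemma).
-/

open Finset
open scoped Classical

noncomputable section

/-- `|α|`, the sum of the entries of a composition. -/
def csize (α : ℕ →₀ ℕ) : ℕ := α.sum fun _ n => n

/-- `#(α)`, the number of nonzero entries of a composition. -/
def csupp (α : ℕ →₀ ℕ) : ℕ := α.support.card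

/-- `#(a)` for a single integer. -/
def nsupp (a : ℕ) : ℕ := if a = 0 then 0 else 1

variable {A : Type*} [CommRing A]

/-- The first factor `ā`: equal to `f` if `α' = 0` and `d = 0`, else `a_{k-|α'|+d}`. -/
def A1 (k : ℕ) (a : ℤ → A) (f : A) (α' : ℕ →₀ ℕ) (d : ℕ) : A :=
  if α' = 0 ∧ d = 0 then f else a ((k : ℤ) - csize α' + d)

/-- The second factor `ā`: equal to `f̃` if `α = 0` and `d = 0`, else `a_{k-|α|-d}`. -/
def A2 (k : ℕ) (a : ℤ → A) (ftil : A) (α : ℕ →₀ ℕ) (d : ℕ) : A :=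
  if α = 0 ∧ d = 0 then ftil else a ((k : ℤ) - csize α - d)

/-- `T(ρ, r) := (-1)^r Σ_{0 ≤ α ≤ ρ, |α| ≤ r} (-1)^{|α|} 2^{#(ρ-α)+#(α)+#(r-|α|)}
    ā_{k-|ρ-α|... } ā_{...}` as in the paper. -/
def Tfun (k : ℕ) (a : ℤ → A) (f ftil : A) (ρ : ℕ →₀ ℕ) (r : ℕ) : A :=
  (-1 : A) ^ r *
    ∑ α ∈ (Finset.Iic ρ).filter fun α => csize α ≤ r,
      (-1 : A) ^ csize α * 2 ^ (csupp (ρ - α) + csupp α + nsupp (r - csize α)) *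
        A1 k a f (ρ - α) (r - csize α) * A2 k a ftil α (r - csize α)

/-! ### Auxiliary lemmas -/

lemma csize_add (α β : ℕ →₀ ℕ) : csize (α + β) = csize α + csize β := by
  simp [csize, Finsupp.sum_add_index']

lemma csize_single (i m : ℕ) : csize (Finsupp.single i m) = m := by
  simp [csize, Finsupp.sum_single_index]

lemma csize_sub_add {α ρ : ℕ →₀ ℕ} (h : α ≤ ρ) : csize (ρ - α) + csize α = csize ρ := by
  rw [← csize_add, tsub_add_cancel_of_le h]

lemma csize_eq_zero {α : ℕ →₀ ℕ} : csize α = 0 ↔ α = 0 := by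
  constructor
  · intro h
    ext i
    by_contra hi
    have hmem : i ∈ α.support := Finsupp.mem_support_iff.2 (by simpa using hi)
    have := Finset.sum_eq_zero_iff.1 h i hmem
    simp at this hi; omega
  · rintro rfl; simp [csize]

lemma sub_eq_zero_iff {α ρ : ℕ →₀ ℕ} (h : α ≤ ρ) : ρ - α = 0 ↔ α = ρ := by
  rw [tsub_eq_zero_iff_le]
  constructor
  · intro h'; exact le_antisymm h h'
  · intro h'; exact le_of_eq h'.symm

lemma csize_erase_add (i : ℕ) (α : ℕ →₀ ℕ) : csize (α.erase i) + α i = csize α := by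
  conv_rhs => rw [← Finsupp.erase_add_single i α]
  rw [csize_add, csize_single]

lemma csupp_erase (i : ℕ) (α : ℕ →₀ ℕ) : csupp α = csupp (α.erase i) + nsupp (α i) := by
  rw [csupp, csupp, Finsupp.support_erase, nsupp]
  by_cases h : α i = 0
  · simp [h, Finset.erase_eq_of_notMem (fun hm => Finsupp.mem_support_iff.1 hm h)]
  · have hm : i ∈ α.support := Finsupp.mem_support_iff.2 h
    rw [Finset.card_erase_of_mem hm, if_neg h]
    have := Finset.card_pos.2 ⟨i, hm⟩
    omega

lemma erase_sub' (i : ℕ) (ρ α : ℕ →₀ ℕ) : (ρ - α).erase i = ρ.erase i - α.erase i := by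
  ext j
  simp only [Finsupp.erase_apply, Finsupp.tsub_apply]
  split_ifs <;> simp

lemma Iic_eq_range (n : ℕ) : Iic n = range (n+1) := by
  ext x; simp [Nat.lt_succ_iff]

/-- Single-coordinate alternating sum vanishes. -/
lemma coord_sum (n : ℕ) (hn : n ≠ 0) :
    ∑ m ∈ Iic n, (-1:ℤ)^m * 2^(nsupp (n-m) + nsupp m) = 0 := by
  induction n with
  | zero => omega
  | succ n ih =>
    by_cases hn1 : n = 0
    · subst hn1; decide
    · have h1 : ∑ m ∈ Iic (n+1), (-1:ℤ)^m * 2^(nsupp (n+1-m) + nsupp m)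
          = (∑ m ∈ Iic n, (-1:ℤ)^m * 2^(nsupp (n+1-m) + nsupp m))
            + (-1:ℤ)^(n+1) * 2^(nsupp 0 + nsupp (n+1)) := by
        rw [Iic_eq_range, Iic_eq_range, Finset.sum_range_succ]
        simp
      have h2 : ∑ m ∈ Iic n, (-1:ℤ)^m * 2^(nsupp (n+1-m) + nsupp m)
          = (∑ m ∈ Iic n, (-1:ℤ)^m * 2^(nsupp (n-m) + nsupp m))
            + ((-1:ℤ)^n * 2^(1 + nsupp n) - (-1:ℤ)^n * 2^(0 + nsupp n)) := by
        have key : ∀ m ∈ Iic n, (-1:ℤ)^m * 2^(nsupp (n+1-m) + nsupp m)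
            = (-1:ℤ)^m * 2^(nsupp (n-m) + nsupp m)
              + (if m = n then ((-1:ℤ)^n * 2^(1 + nsupp n) - (-1:ℤ)^n * 2^(0 + nsupp n)) else 0) := by
          intro m hm
          rw [Finset.mem_Iic] at hm
          by_cases hmn : m = n
          · subst hmn
            rw [if_pos rfl, Nat.sub_self, show m+1-m = 1 from by omega,
              show nsupp 1 = 1 from rfl, show nsupp 0 = 0 from rfl]
            ring
          · have hlt : m < n := lt_of_le_of_ne hm hmn
            have e1 : nsupp (n + 1 - m) = 1 := by simp [nsupp]; omega
            have e2 : nsupp (n - m) = 1 := by simp [nsupp]; omega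
            rw [e1, e2, if_neg hmn]; ring
        rw [Finset.sum_congr rfl key, Finset.sum_add_distrib, Finset.sum_ite_eq' (Iic n) n]
        simp
      rw [h1, h2, ih hn1, show nsupp (n+1) = 1 from by simp [nsupp],
        show nsupp n = 1 from by simp [nsupp, hn1], show nsupp 0 = 0 from rfl]
      ring

/-- Key vanishing: the full alternating sum over `Iic ρ` vanishes when `ρ ≠ 0`. -/
lemma K1 (ρ : ℕ →₀ ℕ) (hρ : ρ ≠ 0) :
    ∑ α ∈ Iic ρ, (-1:ℤ)^(csize α) * 2^(csupp (ρ - α) + csupp α) = 0 := by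
  obtain ⟨i, hi⟩ : ∃ i, ρ i ≠ 0 := by
    by_contra h
    push_neg at h
    exact hρ (Finsupp.ext h)
  have key : ∑ α ∈ Iic ρ, (-1:ℤ)^(csize α) * 2^(csupp (ρ - α) + csupp α)
      = ∑ p ∈ (Iic (ρ.erase i)) ×ˢ (Iic (ρ i)),
          ((-1:ℤ)^(csize p.1) * 2^(csupp (ρ.erase i - p.1) + csupp p.1))
            * ((-1:ℤ)^p.2 * 2^(nsupp (ρ i - p.2) + nsupp p.2)) := by
    refine Finset.sum_nbij' (fun α => (α.erase i, α i))
      (fun p => p.1 + Finsupp.single i p.2) ?_ ?_ ?_ ?_ ?_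
    · intro α hα
      rw [Finset.mem_Iic] at hα
      simp only [Finset.mem_product, Finset.mem_Iic]
      constructor
      · intro j
        simp only [Finsupp.erase_apply]
        split_ifs with h
        · exact Nat.zero_le _
        · exact hα j
      · exact hα i
    · intro p hp
      simp only [Finset.mem_product, Finset.mem_Iic] at hp
      rw [Finset.mem_Iic]
      intro j
      by_cases hj : j = i
      · subst hj
        have h0 := hp.1 j
        rw [Finsupp.erase_apply, if_pos rfl] at h0
        have : p.1 j = 0 := Nat.le_zero.1 h0
        simp [this, hp.2]
      · have h0 := hp.1 j
        rw [Finsupp.erase_apply, if_neg hj] at h0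
        simpa [Finsupp.single_apply, Ne.symm hj] using h0
    · intro α hα
      exact Finsupp.erase_add_single i α
    · intro p hp
      simp only [Finset.mem_product, Finset.mem_Iic] at hp
      have h1 : p.1 i = 0 := by
        have h0 := hp.1 i
        rw [Finsupp.erase_apply, if_pos rfl] at h0
        omega
      show (Finsupp.erase i (p.1 + Finsupp.single i p.2), (p.1 + Finsupp.single i p.2) i) = p
      have e1 : Finsupp.erase i (p.1 + Finsupp.single i p.2) = p.1 := by
        rw [Finsupp.erase_add, Finsupp.erase_single, add_zero,
          Finsupp.erase_of_notMem_support (by simp [Finsupp.mem_support_iff, h1])]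
      have e2 : (p.1 + Finsupp.single i p.2) i = p.2 := by simp [h1]
      rw [e1, e2]
    · intro α hα
      rw [Finset.mem_Iic] at hα
      have e1 : csize α = csize (α.erase i) + α i := (csize_erase_add i α).symm
      have e2 : csupp α = csupp (α.erase i) + nsupp (α i) := csupp_erase i α
      have e3 : csupp (ρ - α) = csupp (ρ.erase i - α.erase i) + nsupp (ρ i - α i) := by
        rw [csupp_erase i (ρ - α), erase_sub', Finsupp.tsub_apply]
      rw [e1, e2, e3, pow_add]
      ring
  rw [key, Finset.sum_product]
  rw [Finset.sum_eq_zero]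
  intro β hβ
  dsimp only
  rw [← Finset.mul_sum, coord_sum (ρ i) hi, mul_zero]

/-- The integer coefficient sum occurring in `Tfun`. -/
def Cint (ρ : ℕ →₀ ℕ) (r : ℕ) : ℤ :=
  ∑ α ∈ (Finset.Iic ρ).filter fun α => csize α ≤ r,
    (-1:ℤ)^(csize α) * 2^(csupp (ρ - α) + csupp α + nsupp (r - csize α))

lemma Cint_antisym (ρ : ℕ →₀ ℕ) (hρ : ρ ≠ 0) (r : ℕ) (hr : r ≤ csize ρ) :
    (-1:ℤ)^r * Cint ρ r + (-1:ℤ)^(csize ρ - r) * Cint ρ (csize ρ - r) = 0 := by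
  set N := csize ρ with hN
  have key : Cint ρ (N - r)
      = ∑ β ∈ (Finset.Iic ρ).filter fun β => r ≤ csize β,
          (-1:ℤ)^(N - csize β) * 2^(csupp (ρ - β) + csupp β + nsupp (csize β - r)) := by
    rw [Cint]
    refine Finset.sum_nbij' (fun α => ρ - α) (fun β => ρ - β) ?_ ?_ ?_ ?_ ?_
    · intro α hα
      simp only [Finset.mem_filter, Finset.mem_Iic] at hα ⊢
      have h1 := csize_sub_add hα.1
      exact ⟨tsub_le_self, by omega⟩
    · intro β hβ
      simp only [Finset.mem_filter, Finset.mem_Iic] at hβ ⊢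
      have h1 := csize_sub_add hβ.1
      exact ⟨tsub_le_self, by omega⟩
    · intro α hα
      simp only [Finset.mem_filter, Finset.mem_Iic] at hα
      exact tsub_tsub_cancel_of_le hα.1
    · intro β hβ
      simp only [Finset.mem_filter, Finset.mem_Iic] at hβ
      exact tsub_tsub_cancel_of_le hβ.1
    · intro α hα
      simp only [Finset.mem_filter, Finset.mem_Iic] at hα
      have h1 := csize_sub_add hα.1
      have h2 : ρ - (ρ - α) = α := tsub_tsub_cancel_of_le hα.1
      rw [h2, show N - csize (ρ - α) = csize α from by omega,
        show csize (ρ - α) - r = (N - r) - csize α from by omega,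
        show csupp α + csupp (ρ - α) = csupp (ρ - α) + csupp α from add_comm _ _]
  rw [key, Cint]
  have e1 : ∀ β ∈ (Finset.Iic ρ).filter fun β => r ≤ csize β,
      (-1:ℤ)^(N-r) * ((-1:ℤ)^(N - csize β) * 2^(csupp (ρ - β) + csupp β + nsupp (csize β - r)))
      = (-1:ℤ)^r * ((-1:ℤ)^(csize β) * 2^(csupp (ρ - β) + csupp β + nsupp (csize β - r))) := by
    intro β hβ
    simp only [Finset.mem_filter, Finset.mem_Iic] at hβ
    have h1 := csize_sub_add hβ.1
    rw [← mul_assoc, ← mul_assoc, ← pow_add, ← pow_add,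
      neg_one_pow_eq_pow_mod_two (R := ℤ), neg_one_pow_eq_pow_mod_two (R := ℤ) (n := r + csize β)]
    congr 2
    omega
  rw [Finset.mul_sum, Finset.mul_sum, Finset.sum_congr rfl e1, ← Finset.mul_sum, ← Finset.mul_sum,
    ← mul_add]
  have e2 : (∑ α ∈ (Finset.Iic ρ).filter fun α => csize α ≤ r,
        (-1:ℤ)^(csize α) * 2^(csupp (ρ - α) + csupp α + nsupp (r - csize α)))
      + (∑ β ∈ (Finset.Iic ρ).filter fun β => r ≤ csize β,
        (-1:ℤ)^(csize β) * 2^(csupp (ρ - β) + csupp β + nsupp (csize β - r)))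
      = 2 * ∑ α ∈ Iic ρ, (-1:ℤ)^(csize α) * 2^(csupp (ρ - α) + csupp α) := by
    rw [Finset.sum_filter, Finset.sum_filter, ← Finset.sum_add_distrib, Finset.mul_sum]
    refine Finset.sum_congr rfl ?_
    intro α hα
    rcases lt_trichotomy (csize α) r with h | h | h
    · rw [if_pos (le_of_lt h), if_neg (by omega), add_zero,
        show nsupp (r - csize α) = 1 from by simp [nsupp]; omega]
      ring
    · rw [if_pos (le_of_eq h), if_pos (le_of_eq h.symm),
        show r - csize α = 0 from by omega, show csize α - r = 0 from by omega,
        show nsupp 0 = 0 from rfl]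
      ring
    · rw [if_neg (by omega), if_pos (le_of_lt h), zero_add,
        show nsupp (csize α - r) = 1 from by simp [nsupp]; omega]
      ring
  rw [e2, K1 ρ hρ, mul_zero, mul_zero]

/-- Generic evaluation of `Tfun` for `0 < r < |ρ|`. -/
lemma Tfun_generic (k : ℕ) (a : ℤ → A) (f ftil : A) (ρ : ℕ →₀ ℕ) (r : ℕ)
    (h0 : 0 < r) (hN : r < csize ρ) :
    Tfun k a f ftil ρ r = (((-1:ℤ)^r * Cint ρ r : ℤ) : A)
      * (a ((k:ℤ) - csize ρ + r) * a ((k:ℤ) - r)) := by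
  set N := csize ρ with hNdef
  rw [Tfun]
  have e : ∀ α ∈ (Finset.Iic ρ).filter fun α => csize α ≤ r,
      (-1 : A) ^ csize α * 2 ^ (csupp (ρ - α) + csupp α + nsupp (r - csize α)) *
        A1 k a f (ρ - α) (r - csize α) * A2 k a ftil α (r - csize α)
      = (((-1:ℤ)^(csize α) * 2^(csupp (ρ - α) + csupp α + nsupp (r - csize α)) : ℤ) : A)
          * (a ((k:ℤ) - N + r) * a ((k:ℤ) - r)) := by
    intro α hα
    simp only [Finset.mem_filter, Finset.mem_Iic] at hα
    have h1 := csize_sub_add hα.1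
    have hne : ρ - α ≠ 0 := by
      intro h
      have h2 : csize (ρ - α) = 0 := by rw [h]; exact csize_eq_zero.2 rfl
      omega
    rw [A1, if_neg (fun hc => hne hc.1), A2,
      if_neg (by
        rintro ⟨rfl, h2'⟩
        rw [show csize (0 : ℕ →₀ ℕ) = 0 from csize_eq_zero.2 rfl] at h2'
        omega),
      show (k:ℤ) - csize (ρ - α) + ↑(r - csize α) = (k:ℤ) - N + r from by
        have h2 := hα.2; omega,
      show (k:ℤ) - csize α - ↑(r - csize α) = (k:ℤ) - r from by
        have h2 := hα.2; omega]
    push_cast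
    ring
  rw [Finset.sum_congr rfl e, ← Finset.sum_mul, ← Int.cast_sum, ← Cint]
  push_cast
  ring

/-- Part 1: `Tfun` vanishes for `r > |ρ|`. -/
lemma Tfun_big (k : ℕ) (a : ℤ → A) (f ftil : A) (ρ : ℕ →₀ ℕ) (hρ : ρ ≠ 0) (r : ℕ)
    (hN : csize ρ < r) : Tfun k a f ftil ρ r = 0 := by
  set N := csize ρ with hNdef
  rw [Tfun]
  have hfil : ((Finset.Iic ρ).filter fun α => csize α ≤ r) = Finset.Iic ρ := by
    refine Finset.filter_true_of_mem ?_
    intro α hα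
    rw [Finset.mem_Iic] at hα
    have := csize_sub_add hα
    omega
  rw [hfil]
  have e : ∀ α ∈ Finset.Iic ρ,
      (-1 : A) ^ csize α * 2 ^ (csupp (ρ - α) + csupp α + nsupp (r - csize α)) *
        A1 k a f (ρ - α) (r - csize α) * A2 k a ftil α (r - csize α)
      = (((-1:ℤ)^(csize α) * 2^(csupp (ρ - α) + csupp α) * 2 : ℤ) : A)
          * (a ((k:ℤ) - N + r) * a ((k:ℤ) - r)) := by
    intro α hα
    rw [Finset.mem_Iic] at hα
    have h1 := csize_sub_add hα
    have hle : csize α ≤ N := by omega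
    have hd : r - csize α ≠ 0 := by omega
    rw [A1, if_neg (fun hc => hd hc.2), A2, if_neg (fun hc => hd hc.2),
      show nsupp (r - csize α) = 1 from by simp [nsupp, hd],
      show (k:ℤ) - csize (ρ - α) + ↑(r - csize α) = (k:ℤ) - N + r from by omega,
      show (k:ℤ) - csize α - ↑(r - csize α) = (k:ℤ) - r from by omega]
    push_cast
    ring
  rw [Finset.sum_congr rfl e, ← Finset.sum_mul, ← Int.cast_sum,
    show (∑ α ∈ Finset.Iic ρ, ((-1:ℤ)^(csize α) * 2^(csupp (ρ - α) + csupp α) * 2)) = 0 from by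
      rw [← Finset.sum_mul, K1 ρ hρ, zero_mul]]
  simp

/-- Evaluation at `r = 0`. -/
lemma Tfun_zero (k : ℕ) (a : ℤ → A) (f ftil : A) (ρ : ℕ →₀ ℕ) (hρ : ρ ≠ 0) :
    Tfun k a f ftil ρ 0 = 2 ^ (csupp ρ) * (a ((k:ℤ) - csize ρ) * ftil) := by
  rw [Tfun]
  have hfil : ((Finset.Iic ρ).filter fun α => csize α ≤ 0) = {0} := by
    ext α
    simp only [Finset.mem_filter, Finset.mem_Iic, Finset.mem_singleton, Nat.le_zero,
      csize_eq_zero]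
    exact ⟨fun h => h.2, fun h => ⟨by rw [h]; exact zero_le, h⟩⟩
  rw [hfil, Finset.sum_singleton]
  rw [show csize (0 : ℕ →₀ ℕ) = 0 from csize_eq_zero.2 rfl]
  rw [A1, if_neg (by simpa using hρ), A2, if_pos ⟨rfl, rfl⟩]
  simp [csupp, nsupp]
  ring

/-- Evaluation at `r = |ρ|`. -/
lemma Tfun_top (k : ℕ) (a : ℤ → A) (f ftil : A) (ρ : ℕ →₀ ℕ) (hρ : ρ ≠ 0) :
    Tfun k a f ftil ρ (csize ρ) = 2 ^ (csupp ρ) * (a ((k:ℤ) - csize ρ) * (f - 2 * a k)) := by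
  set N := csize ρ with hNdef
  have hN0 : N ≠ 0 := fun h => hρ (csize_eq_zero.1 h)
  rw [Tfun]
  have hfil : ((Finset.Iic ρ).filter fun α => csize α ≤ N) = Finset.Iic ρ := by
    refine Finset.filter_true_of_mem ?_
    intro α hα
    rw [Finset.mem_Iic] at hα
    have := csize_sub_add hα
    omega
  rw [hfil]
  have hmem : ρ ∈ Finset.Iic ρ := Finset.mem_Iic.2 le_rfl
  rw [← Finset.sum_erase_add _ _ hmem]
  have hterm : (-1 : A) ^ csize ρ * 2 ^ (csupp (ρ - ρ) + csupp ρ + nsupp (N - csize ρ)) *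
        A1 k a f (ρ - ρ) (N - csize ρ) * A2 k a ftil ρ (N - csize ρ)
      = (-1 : A) ^ N * (2 ^ (csupp ρ) * f * a ((k:ℤ) - N)) := by
    rw [show ρ - ρ = 0 from tsub_self ρ, show N - csize ρ = 0 from by omega,
      A1, if_pos ⟨rfl, rfl⟩, A2, if_neg (by simpa using hρ)]
    simp only [csupp, nsupp, Finsupp.support_zero, Finset.card_empty, if_pos rfl, Nat.cast_zero,
      sub_zero, zero_add, hNdef]
    norm_num
    ring
  have e : ∀ α ∈ (Finset.Iic ρ).erase ρ,
      (-1 : A) ^ csize α * 2 ^ (csupp (ρ - α) + csupp α + nsupp (N - csize α)) *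
        A1 k a f (ρ - α) (N - csize α) * A2 k a ftil α (N - csize α)
      = (((-1:ℤ)^(csize α) * 2^(csupp (ρ - α) + csupp α) * 2 : ℤ) : A)
          * (a (k:ℤ) * a ((k:ℤ) - N)) := by
    intro α hα
    rw [Finset.mem_erase, Finset.mem_Iic] at hα
    have h1 := csize_sub_add hα.2
    have hne : ρ - α ≠ 0 := fun h => hα.1 ((sub_eq_zero_iff hα.2).1 h)
    have hlt : csize α < N := by
      rcases Nat.lt_or_ge (csize α) N with h | h
      · exact h
      · exfalso
        have : csize (ρ - α) = 0 := by omega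
        exact hne (csize_eq_zero.1 this)
    have hd : N - csize α ≠ 0 := by omega
    rw [A1, if_neg (fun hc => hne hc.1), A2, if_neg (fun hc => hd hc.2),
      show nsupp (N - csize α) = 1 from by simp [nsupp, hd],
      show (k:ℤ) - csize (ρ - α) + ↑(N - csize α) = (k:ℤ) from by omega,
      show (k:ℤ) - csize α - ↑(N - csize α) = (k:ℤ) - N from by omega]
    push_cast
    ring
  rw [Finset.sum_congr rfl e, ← Finset.sum_mul, ← Int.cast_sum]
  have hsum : (∑ α ∈ (Finset.Iic ρ).erase ρ,
      ((-1:ℤ)^(csize α) * 2^(csupp (ρ - α) + csupp α) * 2)) = -2 * ((-1:ℤ)^N * 2^(csupp ρ)) := by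
    rw [← Finset.sum_mul]
    have hK := Finset.sum_erase_add (Finset.Iic ρ)
      (fun α => (-1:ℤ)^(csize α) * 2^(csupp (ρ - α) + csupp α)) hmem
    rw [K1 ρ hρ] at hK
    have hterm2 : (-1:ℤ)^(csize ρ) * 2^(csupp (ρ - ρ) + csupp ρ) = (-1:ℤ)^N * 2^(csupp ρ) := by
      rw [show ρ - ρ = 0 from tsub_self ρ]
      simp [csupp, hNdef]
    rw [hterm2] at hK
    have hrest : (∑ α ∈ (Finset.Iic ρ).erase ρ,
        (-1:ℤ)^(csize α) * 2^(csupp (ρ - α) + csupp α)) = -((-1:ℤ)^N * 2^(csupp ρ)) := by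
      linarith
    rw [hrest]; ring
  rw [hsum, hterm]
  push_cast
  have hsq : (-1 : A)^N * (-1 : A)^N = 1 := by
    rw [← pow_add, ← two_mul, pow_mul]; norm_num
  calc (-1:A)^N * ((-2 * ((-1:A)^N * 2^(csupp ρ))) * (a (k:ℤ) * a ((k:ℤ) - N))
        + (-1:A)^N * (2^(csupp ρ) * f * a ((k:ℤ) - N)))
      = ((-1:A)^N * (-1:A)^N) * (2^(csupp ρ) * (a ((k:ℤ) - N) * (f - 2 * a (k:ℤ)))) := by ring
    _ = 2 ^ (csupp ρ) * (a ((k:ℤ) - N) * (f - 2 * a (k:ℤ))) := by rw [hsq]; ring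

theorem statement14 (k : ℕ) (hk : 1 ≤ k) (a : ℤ → A) (ha : ∀ n : ℤ, n < 0 → a n = 0)
    (f ftil : A) (hff : f + ftil = 2 * a k) (ρ : ℕ →₀ ℕ) (hρ : ρ ≠ 0) :
    (∀ r : ℕ, csize ρ < r → Tfun k a f ftil ρ r = 0) ∧
    (∀ r : ℕ, r ≤ csize ρ → Tfun k a f ftil ρ r + Tfun k a f ftil ρ (csize ρ - r) = 0) := by
  constructor
  · intro r hr
    exact Tfun_big k a f ftil ρ hρ r hr
  · intro r hr
    have hboundary : Tfun k a f ftil ρ 0 + Tfun k a f ftil ρ (csize ρ) = 0 := by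
      rw [Tfun_zero k a f ftil ρ hρ, Tfun_top k a f ftil ρ hρ]
      have : ftil = 2 * a k - f := by linear_combination hff
      rw [this]
      ring
    rcases Nat.eq_zero_or_pos r with h0 | h0
    · subst h0
      rw [Nat.sub_zero]
      exact hboundary
    · rcases eq_or_lt_of_le hr with heq | hlt
      · subst heq
        rw [Nat.sub_self]
        rw [add_comm]
        exact hboundary
      · have h0' : 0 < csize ρ - r := by omega
        have hlt' : csize ρ - r < csize ρ := by omega
        rw [Tfun_generic k a f ftil ρ r h0 hlt, Tfun_generic k a f ftil ρ (csize ρ - r) h0' hlt']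
        rw [show (k:ℤ) - csize ρ + ↑(csize ρ - r) = (k:ℤ) - r from by omega,
          show (k:ℤ) - ↑(csize ρ - r) = (k:ℤ) - csize ρ + r from by omega]
        have hC := Cint_antisym ρ hρ r hr
        calc (((-1:ℤ)^r * Cint ρ r : ℤ) : A) * (a ((k:ℤ) - csize ρ + r) * a ((k:ℤ) - r))
              + (((-1:ℤ)^(csize ρ - r) * Cint ρ (csize ρ - r) : ℤ) : A)
                * (a ((k:ℤ) - r) * a ((k:ℤ) - csize ρ + r))
            = (((-1:ℤ)^r * Cint ρ r + (-1:ℤ)^(csize ρ - r) * Cint ρ (csize ρ - r) : ℤ) : A)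
                * (a ((k:ℤ) - csize ρ + r) * a ((k:ℤ) - r)) := by push_cast; ring
          _ = 0 := by rw [hC]; simp
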